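/- arXiv:2602.11139 — 2 statements merged into one kernel-verified Lean document; each statement's English description precedes it below -/
import Mathlib

section
/- Let k ≥ 0 and m ≥ 1 be integers, and for i ∈ {0, …, m−1} define the set I_{i,k,m} := { (i + 2^l − 1) mod m : 0 ≤ l ≤ k−1 } ⊆ {0, …, m−1}. If m ≥ 2^k, then for all indices 0 ≤ i < j ≤ m−1 the intersection I_{i,k,m} ∩ I_{j,k,m} contains at most one element. -/
/-!
If a column lies in the groups of `i` and `j`, it is `i + 2^a - 1 ≡ j + 2^b - 1 (mod m)` for some
`a, b < k`. Two common columns give `i + 2^a ≡ j + 2^b` and `i + 2^c ≡ j + 2^d`, hence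
`2^a + 2^d ≡ 2^b + 2^c (mod m)`. Both sides lie in `[2, 2^k] ⊆ [1, m]`, so they are equal, and by
uniqueness of binary expansions `{a, d} = {b, c}`. Now `a = b` would give `i ≡ j (mod m)`, so `a = c`
and the two columns coincide.
-/

theorem two_pow_add_two_pow_lt {x y v : ℕ} (u : ℕ) (hxy : x ≤ y) (hyv : y < v) :
    2 ^ x + 2 ^ y < 2 ^ u + 2 ^ v :=
  calc 2 ^ x + 2 ^ y ≤ 2 ^ y + 2 ^ y := by gcongr; norm_num
    _ = 2 ^ (y + 1) := by ring
    _ ≤ 2 ^ v := Nat.pow_le_pow_right two_pos hyv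
    _ < 2 ^ u + 2 ^ v := Nat.lt_add_of_pos_left (by positivity)

theorem two_pow_add_two_pow_eq_iff_of_le {x y u v : ℕ} (hxy : x ≤ y) (huv : u ≤ v) :
    2 ^ x + 2 ^ y = 2 ^ u + 2 ^ v ↔ x = u ∧ y = v := by
  refine ⟨fun h => ?_, fun ⟨hxu, hyv⟩ => hxu ▸ hyv ▸ rfl⟩
  obtain rfl : y = v := by
    rcases lt_trichotomy y v with hlt | heq | hgt
    · exact absurd h (two_pow_add_two_pow_lt u hxy hlt).ne
    · exact heq
    · exact absurd h (two_pow_add_two_pow_lt x huv hgt).ne'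
  exact ⟨Nat.pow_right_injective le_rfl (Nat.add_right_cancel h), rfl⟩

theorem two_pow_add_two_pow_inj {a d b c : ℕ} (h : 2 ^ a + 2 ^ d = 2 ^ b + 2 ^ c) :
    (a = b ∧ d = c) ∨ (a = c ∧ d = b) := by
  rcases le_total a d with had | hda <;> rcases le_total b c with hbc | hcb
  · have := (two_pow_add_two_pow_eq_iff_of_le had hbc).1 h; omega
  · have := (two_pow_add_two_pow_eq_iff_of_le had hcb).1 (by omega); omega
  · have := (two_pow_add_two_pow_eq_iff_of_le hda hbc).1 (by omega); omega
  · have := (two_pow_add_two_pow_eq_iff_of_le hda hcb).1 (by omega); omega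

theorem two_pow_add_two_pow_le {a d k : ℕ} (ha : a < k) (hd : d < k) : 2 ^ a + 2 ^ d ≤ 2 ^ k := by
  obtain ⟨n, rfl⟩ : ∃ n, k = n + 1 := Nat.exists_eq_add_one_of_ne_zero (by omega)
  have ha' : 2 ^ a ≤ 2 ^ n := Nat.pow_le_pow_right two_pos (by omega)
  have hd' : 2 ^ d ≤ 2 ^ n := Nat.pow_le_pow_right two_pos (by omega)
  rw [pow_succ]
  omega

namespace Nat

theorem modEq_of_sub_one_mod_eq {x y m : ℕ} (hx : 0 < x) (hy : 0 < y)
    (h : (x - 1) % m = (y - 1) % m) : x ≡ y [MOD m] := by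
  have h' : x - 1 + 1 ≡ y - 1 + 1 [MOD m] := Nat.ModEq.add_right 1 h
  rwa [Nat.sub_add_cancel hx, Nat.sub_add_cancel hy] at h'

theorem ModEq.eq_of_pos_of_le {x y m : ℕ} (h : x ≡ y [MOD m]) (hx : 0 < x) (hxm : x ≤ m)
    (hy : 0 < y) (hym : y ≤ m) : x = y := by
  have h' : x - 1 ≡ y - 1 [MOD m] :=
    Nat.ModEq.add_right_cancel' 1 (by rwa [Nat.sub_add_cancel hx, Nat.sub_add_cancel hy])
  have := h'.eq_of_lt_of_lt (by omega) (by omega)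
  omega

end Nat

theorem eq_of_add_two_pow_modEq {i j k m a b c d : ℕ} (hij : i ≠ j) (hi : i < m) (hj : j < m)
    (hmk : 2 ^ k ≤ m) (ha : a < k) (hb : b < k) (hc : c < k) (hd : d < k)
    (hab : i + 2 ^ a ≡ j + 2 ^ b [MOD m]) (hcd : i + 2 ^ c ≡ j + 2 ^ d [MOD m]) : a = c := by
  have hsum_mod : 2 ^ a + 2 ^ d ≡ 2 ^ b + 2 ^ c [MOD m] :=
    Nat.ModEq.add_left_cancel' (i + j) (by convert hab.add hcd.symm using 1 <;> ring)
  have hsum : 2 ^ a + 2 ^ d = 2 ^ b + 2 ^ c :=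
    hsum_mod.eq_of_pos_of_le (by positivity) ((two_pow_add_two_pow_le ha hd).trans hmk)
      (by positivity) ((two_pow_add_two_pow_le hb hc).trans hmk)
  rcases two_pow_add_two_pow_inj hsum with ⟨rfl, -⟩ | ⟨hac, -⟩
  · exact absurd ((Nat.ModEq.add_right_cancel' _ hab).eq_of_lt_of_lt hi hj) hij
  · exact hac

theorem feature_group_intersection_general (k m : ℕ) (hmk : 2 ^ k ≤ m) :
    ∀ i j : ℕ, i < j → j ≤ m - 1 →
      (((Finset.range k).image (fun l => (i + 2 ^ l - 1) % m)) ∩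
        ((Finset.range k).image (fun l => (j + 2 ^ l - 1) % m))).card ≤ 1 := by
  intro i j hij hjm
  have hj : j < m := by have := Nat.one_le_two_pow (n := k); omega
  refine Finset.card_le_one.2 fun x hx y hy => ?_
  simp only [Finset.mem_inter, Finset.mem_image, Finset.mem_range] at hx hy
  obtain ⟨⟨a, ha, rfl⟩, b, hb, hab⟩ := hx
  obtain ⟨⟨c, hc, rfl⟩, d, hd, hcd⟩ := hy
  have hac := eq_of_add_two_pow_modEq hij.ne (hij.trans hj) hj hmk ha hb hc hd
    (Nat.modEq_of_sub_one_mod_eq (by positivity) (by positivity) hab.symm)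
    (Nat.modEq_of_sub_one_mod_eq (by positivity) (by positivity) hcd.symm)
  rw [hac]

/-- **Intersections of feature groups.** For `k ≥ 0`, `m ≥ 1`, and
`i ∈ {0, …, m−1}`, define `I_{i,k,m} := {(i + 2^l − 1) % m : 0 ≤ l ≤ k−1}`.
If `m ≥ 2^k`, then for all `0 ≤ i < j ≤ m−1`, `|I_{i,k,m} ∩ I_{j,k,m}| ≤ 1`. -/
theorem feature_group_intersection (k m : ℕ) (hm : 1 ≤ m) (hmk : 2 ^ k ≤ m) :
    ∀ i j : ℕ, i < j → j ≤ m - 1 →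
      (((Finset.range k).image (fun l => (i + 2 ^ l - 1) % m)) ∩
        ((Finset.range k).image (fun l => (j + 2 ^ l - 1) % m))).card ≤ 1 :=
  feature_group_intersection_general k m hmk
end

section
/- Let g be an even probability density on ℝ^d (g ≥ 0, even, with ∫ g = 1). Let W be a random vector in ℝ^d with density g and let b be uniformly distributed on [0, 2π], independent of W. Then for all x, x' ∈ ℝ^d, E[ 2 cos(⟨W, x⟩ + b) · cos(⟨W, x'⟩ + b) ] = ǧ(x − x'), where ǧ(u) = ∫_{ℝ^d} e^{i⟨u,ω⟩} g(ω) dω is the inverse Fourier transform of g (which is real-valued since g is even). -/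
/-!
Independence makes the law of `(W, b)` the product of the two laws, so by Fubini one may
average over `b` first. Since `2 cos A cos B = cos (A - B) + cos (A + B)` and the phase `2b` of
`cos (A + B)` sweeps two full periods, the `b`-average of
`2 cos (⟨w, x⟩ + b) cos (⟨w, x'⟩ + b)` is `cos ⟨w, x - x'⟩`. Averaging over `W ~ g` then gives
`∫ cos ⟨x - x', ω⟩ g ω dω`, which is `ǧ (x - x')` because the sine part of the Fourier integral
vanishes for even `g`.
-/

open MeasureTheory Complex ProbabilityTheory

/-- The inverse Fourier transform `ǧ(x) = ∫ e^{i⟨x,ω⟩} g(ω) dω` of `g : ℝ^d → ℝ`. -/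
noncomputable def invFourier (d : ℕ) (g : EuclideanSpace ℝ (Fin d) → ℝ)
    (x : EuclideanSpace ℝ (Fin d)) : ℂ :=
  ∫ ω, Complex.exp (Complex.I * ((inner ℝ x ω : ℝ) : ℂ)) * (g ω : ℂ)

open Set
open scoped RealInnerProductSpace

section

variable {E : Type*} [NormedAddCommGroup E] [InnerProductSpace ℝ E] [MeasurableSpace E]

lemma integral_sin_inner_mul_eq_zero_of_even [MeasurableNeg E] {μ : Measure E}
    [μ.IsNegInvariant] {g : E → ℝ} (heven : ∀ ω, g (-ω) = g ω) (u : E) :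
    ∫ ω, Real.sin ⟪u, ω⟫ * g ω ∂μ = 0 := by
  have h := integral_neg_eq_self (fun ω => Real.sin ⟪u, ω⟫ * g ω) μ
  simp only [inner_neg_right, heven, Real.sin_neg, neg_mul, integral_neg] at h
  linarith

variable [OpensMeasurableSpace E]

lemma integrable_cos_inner_mul {μ : Measure E} {g : E → ℝ} (hg : Integrable g μ) (u : E) :
    Integrable (fun ω => Real.cos ⟪u, ω⟫ * g ω) μ :=
  hg.bdd_mul (by fun_prop) (.of_forall fun _ => Real.abs_cos_le_one _)

lemma integrable_sin_inner_mul {μ : Measure E} {g : E → ℝ} (hg : Integrable g μ) (u : E) :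
    Integrable (fun ω => Real.sin ⟪u, ω⟫ * g ω) μ :=
  hg.bdd_mul (by fun_prop) (.of_forall fun _ => Real.abs_sin_le_one _)

end

lemma invFourier_eq_integral_cos_mul {d : ℕ} {g : EuclideanSpace ℝ (Fin d) → ℝ}
    (hint : Integrable g) (heven : ∀ ω, g (-ω) = g ω) (u : EuclideanSpace ℝ (Fin d)) :
    invFourier d g u = ((∫ ω, Real.cos ⟪u, ω⟫ * g ω : ℝ) : ℂ) := by
  have hexp : ∀ ω, Complex.exp (Complex.I * (⟪u, ω⟫ : ℂ)) * (g ω : ℂ) =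
      ((Real.cos ⟪u, ω⟫ * g ω : ℝ) : ℂ) + ((Real.sin ⟪u, ω⟫ * g ω : ℝ) : ℂ) * Complex.I := by
    intro ω
    rw [mul_comm Complex.I, Complex.exp_mul_I]
    push_cast
    ring
  simp only [invFourier, hexp]
  rw [integral_add (integrable_cos_inner_mul hint u).ofReal
      ((integrable_sin_inner_mul hint u).ofReal.mul_const _), integral_mul_const,
    integral_complex_ofReal, integral_complex_ofReal,
    integral_sin_inner_mul_eq_zero_of_even heven u]
  simp

lemma integral_cos_add_two_mul_eq_zero (c : ℝ) :
    ∫ t in (0 : ℝ)..2 * Real.pi, Real.cos (c + 2 * t) = 0 := by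
  have hderiv : ∀ t, HasDerivAt (fun t => Real.sin (c + 2 * t) / 2) (Real.cos (c + 2 * t)) t := by
    intro t
    simpa using (((hasDerivAt_id t).const_mul 2).const_add c).sin.div_const 2
  rw [intervalIntegral.integral_eq_sub_of_hasDerivAt (fun t _ => hderiv t)
    ((by fun_prop : Continuous _).intervalIntegrable _ _)]
  have htwo_periods : c + 2 * (2 * Real.pi) = c + (2 : ℕ) * (2 * Real.pi) := by push_cast; ring
  simp [htwo_periods, Real.sin_add_nat_mul_two_pi]

lemma integral_cond_Icc {a b : ℝ} (hab : a ≤ b) (f : ℝ → ℝ) :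
    ∫ t, f t ∂(volume[|Icc a b]) = (b - a)⁻¹ * ∫ t in a..b, f t := by
  rw [ProbabilityTheory.cond, integral_smul_measure, Real.volume_Icc,
    intervalIntegral.integral_of_le hab, integral_Icc_eq_integral_Ioc, ENNReal.toReal_inv,
    ENNReal.toReal_ofReal (sub_nonneg.2 hab), smul_eq_mul]

lemma integral_two_mul_cos_add_mul_cos_add_uniform (a a' : ℝ) :
    ∫ t, 2 * Real.cos (a + t) * Real.cos (a' + t) ∂(volume[|Icc 0 (2 * Real.pi)]) =
      Real.cos (a - a') := by
  have hproduct_to_sum : ∀ t, 2 * Real.cos (a + t) * Real.cos (a' + t) =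
      Real.cos (a - a') + Real.cos (a + a' + 2 * t) := by
    intro t
    rw [show a - a' = (a + t) - (a' + t) by ring, show a + a' + 2 * t = (a + t) + (a' + t) by ring,
      Real.cos_sub (a + t), Real.cos_add (a + t)]
    ring
  simp only [integral_cond_Icc Real.two_pi_pos.le, hproduct_to_sum]
  rw [intervalIntegral.integral_add intervalIntegrable_const
      ((by fun_prop : Continuous _).intervalIntegrable _ _),
    integral_cos_add_two_mul_eq_zero]
  field_simp
  simp

lemma integral_withDensity_ofReal {X : Type*} [MeasurableSpace X] {μ : Measure X} {g : X → ℝ}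
    (hg : AEMeasurable g μ) (hpos : ∀ x, 0 ≤ g x) (f : X → ℝ) :
    ∫ x, f x ∂(μ.withDensity fun x => ENNReal.ofReal (g x)) = ∫ x, f x * g x ∂μ := by
  rw [integral_withDensity_eq_integral_toReal_smul₀ hg.ennreal_ofReal
    (.of_forall fun _ => ENNReal.ofReal_lt_top)]
  simp [ENNReal.toReal_ofReal (hpos _), mul_comm]

lemma ProbabilityTheory.IndepFun.integral_comp_eq_integral_integral {Ω α β F : Type*}
    [MeasurableSpace Ω] [MeasurableSpace α] [MeasurableSpace β]
    [NormedAddCommGroup F] [NormedSpace ℝ F] {μ : Measure Ω} [IsFiniteMeasure μ]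
    {X : Ω → α} {Y : Ω → β} (hXY : IndepFun X Y μ) (hX : AEMeasurable X μ)
    (hY : AEMeasurable Y μ) {f : α × β → F} (hf : Integrable f ((μ.map X).prod (μ.map Y))) :
    ∫ ω, f (X ω, Y ω) ∂μ = ∫ x, ∫ y, f (x, y) ∂(μ.map Y) ∂(μ.map X) := by
  have hlaw := hXY.map_prod_eq_prod_map_map hX hY
  rw [← integral_prod f hf, ← hlaw,
    integral_map (hX.prodMk hY) (hlaw ▸ hf.aestronglyMeasurable)]

theorem random_fourier_features_general (d : ℕ) (g : EuclideanSpace ℝ (Fin d) → ℝ)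
    (hint : Integrable g) (hpos : ∀ ω, 0 ≤ g ω) (heven : ∀ ω, g (-ω) = g ω)
    {Ω : Type*} [MeasureSpace Ω] [IsProbabilityMeasure (ℙ : Measure Ω)]
    (W : Ω → EuclideanSpace ℝ (Fin d)) (b : Ω → ℝ)
    (hW : Measurable W) (hb : Measurable b)
    (hWlaw : Measure.map W ℙ = volume.withDensity (fun ω => ENNReal.ofReal (g ω)))
    (hblaw : MeasureTheory.pdf.IsUniform b (Set.Icc 0 (2 * Real.pi)) ℙ volume)
    (hindep : IndepFun W b ℙ) :
    ∀ x x' : EuclideanSpace ℝ (Fin d),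
      ((∫ ω', 2 * Real.cos ((inner ℝ (W ω') x : ℝ) + b ω') *
          Real.cos ((inner ℝ (W ω') x' : ℝ) + b ω') ∂ℙ : ℝ) : ℂ) =
        invFourier d g (x - x') := by
  intro x x'
  have hbounded : Integrable (fun p : EuclideanSpace ℝ (Fin d) × ℝ =>
      2 * Real.cos (⟪p.1, x⟫ + p.2) * Real.cos (⟪p.1, x'⟫ + p.2))
      ((Measure.map W ℙ).prod (Measure.map b ℙ)) := by
    refine .of_bound (by fun_prop) 2 (.of_forall fun p => ?_)
    rw [norm_mul, norm_mul, Real.norm_two, mul_assoc]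
    exact mul_le_of_le_one_right zero_le_two
      (mul_le_one₀ (Real.abs_cos_le_one _) (abs_nonneg _) (Real.abs_cos_le_one _))
  rw [invFourier_eq_integral_cos_mul hint heven, hindep.integral_comp_eq_integral_integral
    hW.aemeasurable hb.aemeasurable hbounded]
  congr 1
  calc ∫ w, ∫ t, 2 * Real.cos (⟪w, x⟫ + t) * Real.cos (⟪w, x'⟫ + t) ∂(Measure.map b ℙ)
        ∂(Measure.map W ℙ)
      = ∫ w, Real.cos ⟪w, x - x'⟫ ∂(Measure.map W ℙ) := by
        rw [show Measure.map b ℙ = _ from hblaw]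
        simp only [integral_two_mul_cos_add_mul_cos_add_uniform, inner_sub_right]
    _ = ∫ w, Real.cos ⟪x - x', w⟫ * g w := by
        rw [hWlaw, integral_withDensity_ofReal hint.aemeasurable hpos]
        simp only [real_inner_comm]

/-- **Random Fourier features identity.** Let `g` be an even probability density on
`ℝ^d`, let `W` be a random vector with density `g`, and let `b` be uniform on
`[0, 2π]`, independent of `W`. Then for all `x, x'`,
`E[2 cos(⟨W,x⟩ + b) cos(⟨W,x'⟩ + b)] = ǧ(x − x')`. -/
theorem random_fourier_features (d : ℕ) (g : EuclideanSpace ℝ (Fin d) → ℝ)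
    (hint : Integrable g) (hpos : ∀ ω, 0 ≤ g ω) (heven : ∀ ω, g (-ω) = g ω)
    (hone : ∫ ω, g ω = 1)
    {Ω : Type*} [MeasureSpace Ω] [IsProbabilityMeasure (ℙ : Measure Ω)]
    (W : Ω → EuclideanSpace ℝ (Fin d)) (b : Ω → ℝ)
    (hW : Measurable W) (hb : Measurable b)
    (hWlaw : Measure.map W ℙ = volume.withDensity (fun ω => ENNReal.ofReal (g ω)))
    (hblaw : MeasureTheory.pdf.IsUniform b (Set.Icc 0 (2 * Real.pi)) ℙ volume)
    (hindep : IndepFun W b ℙ) :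
    ∀ x x' : EuclideanSpace ℝ (Fin d),
      ((∫ ω', 2 * Real.cos ((inner ℝ (W ω') x : ℝ) + b ω') *
          Real.cos ((inner ℝ (W ω') x' : ℝ) + b ω') ∂ℙ : ℝ) : ℂ) =
        invFourier d g (x - x') :=
  random_fourier_features_general d g hint hpos heven W b hW hb hWlaw hblaw hindep
end
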